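/- arXiv:1501.04031 — 3 statements merged into one kernel-verified Lean document; each statement's English description precedes it below -/
import Mathlib

section
/- In an irreducible root system R of rank at least 2 that is not of type A_2, for every simple root α there are at least 3 positive roots β with α ≤ β (i.e., β − α is a non-negative integer combination of simple roots, including β = α itself). -/
open scoped RealInnerProductSpace
open scoped Classical

/-- A reduced crystallographic root system of rank `n` in Euclidean `n`-space,
together with a chosen base of simple roots. -/
structure RootSystemData (n : ℕ) where
  R : Finset (EuclideanSpace ℝ (Fin n))
  nonzero : ∀ β ∈ R, β ≠ 0
  span_top : Submodule.span ℝ (R : Set (EuclideanSpace ℝ (Fin n))) = ⊤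
  reflect_mem : ∀ α ∈ R, ∀ β ∈ R,
    β - ((2 * ⟪β, α⟫ / ⟪α, α⟫) • α) ∈ R
  crystallographic : ∀ α ∈ R, ∀ β ∈ R, ∃ m : ℤ, 2 * ⟪β, α⟫ / ⟪α, α⟫ = (m : ℝ)
  reduced : ∀ α ∈ R, ∀ t : ℝ, t • α ∈ R → t = 1 ∨ t = -1
  simple : Fin n → EuclideanSpace ℝ (Fin n)
  simple_mem : ∀ i, simple i ∈ R
  simple_indep : LinearIndependent ℝ simple
  base : ∀ β ∈ R,
    (∃ c : Fin n → ℕ, β = ∑ i, (c i : ℝ) • simple i) ∨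
    (∃ c : Fin n → ℕ, β = -∑ i, (c i : ℝ) • simple i)

namespace RootSystemData

variable {n : ℕ} (D : RootSystemData n)

/-- The set of positive roots with respect to the base. -/
noncomputable def Pos : Finset (EuclideanSpace ℝ (Fin n)) :=
  D.R.filter (fun β => ∃ c : Fin n → ℕ, β = ∑ i, (c i : ℝ) • D.simple i)

/-- `μ` is a non-negative integral combination of the simple roots. -/
def NS (μ : EuclideanSpace ℝ (Fin n)) : Prop :=
  ∃ c : Fin n → ℕ, μ = ∑ i, (c i : ℝ) • D.simple i

/-- The root system is irreducible: the base cannot be split into two non-empty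
mutually orthogonal parts. -/
def IsIrreducible : Prop :=
  ¬ ∃ s : Set (Fin n), s.Nonempty ∧ sᶜ.Nonempty ∧
      ∀ i ∈ s, ∀ j ∈ sᶜ, ⟪D.simple i, D.simple j⟫ = 0

/-- The root system is of type `A₂`: rank two, with both Cartan integers equal to `-1`. -/
def IsA2 : Prop :=
  n = 2 ∧ ∀ i j : Fin n, i ≠ j →
    2 * ⟪D.simple j, D.simple i⟫ / ⟪D.simple i, D.simple i⟫ = -1

end RootSystemData

namespace RootSystemData

variable {n : ℕ} (D : RootSystemData n)

lemma inner_self_pos' {β} (h : β ∈ D.R) : (0:ℝ) < ⟪β, β⟫ :=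
  lt_of_le_of_ne real_inner_self_nonneg
    (fun h' => D.nonzero β h (inner_self_eq_zero.mp h'.symm))

lemma neg_mem {β} (h : β ∈ D.R) : -β ∈ D.R := by
  have hB := D.inner_self_pos' h
  have h2 : 2 * ⟪β, β⟫ / ⟪β, β⟫ = (2:ℝ) := by
    rw [mul_div_assoc, div_self hB.ne', mul_one]
  have hr := D.reflect_mem β h β h
  rw [h2] at hr
  have e : β - (2:ℝ) • β = -β := by
    rw [two_smul]; abel
  rwa [e] at hr

/-- The key addition lemma: if the inner product of two non-opposite roots is
negative, their sum is a root. -/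
lemma add_mem' {a b : EuclideanSpace ℝ (Fin n)} (ha : a ∈ D.R) (hb : b ∈ D.R)
    (hne' : b ≠ -a) (hinner : ⟪b, a⟫ < 0) : b + a ∈ D.R := by
  obtain ⟨m, hm⟩ := D.crystallographic a ha b hb
  obtain ⟨m', hm'⟩ := D.crystallographic b hb a ha
  have hA := D.inner_self_pos' ha
  have hB := D.inner_self_pos' hb
  have hba : ⟪a, b⟫ = ⟪b, a⟫ := real_inner_comm b a
  have hmneg : (m:ℝ) < 0 := by
    rw [← hm]; exact div_neg_of_neg_of_pos (by linarith) hA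
  have hm'neg : (m':ℝ) < 0 := by
    rw [← hm', hba]; exact div_neg_of_neg_of_pos (by linarith) hB
  have hm1 : m < 0 := by exact_mod_cast hmneg
  have hm'1 : m' < 0 := by exact_mod_cast hm'neg
  have hCS : ⟪b, a⟫ * ⟪b, a⟫ ≤ ⟪b, b⟫ * ⟪a, a⟫ := real_inner_mul_inner_self_le b a
  have hprod : (m:ℝ) * (m':ℝ) ≤ 4 := by
    rw [← hm, ← hm', hba, div_mul_div_comm, div_le_iff₀ (by positivity)]
    nlinarith
  have hprodZ : m * m' ≤ 4 := by exact_mod_cast hprod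
  by_cases h1 : m = -1
  · have hr := D.reflect_mem a ha b hb
    rw [hm, h1] at hr
    simpa [sub_neg_eq_add] using hr
  by_cases h2 : m' = -1
  · have hr := D.reflect_mem b hb a ha
    rw [hm', h2] at hr
    have e : a - ((-1:ℤ):ℝ) • b = b + a := by push_cast; rw [neg_one_smul]; abel
    rwa [e] at hr
  · have hm2 : m ≤ -2 := by omega
    have hm'2 : m' ≤ -2 := by omega
    have e1 : m = -2 := by nlinarith
    have e2 : m' = -2 := by nlinarith
    have f1 : ⟪b, a⟫ = -⟪a, a⟫ := by
      rw [e1] at hm; push_cast at hm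
      rw [div_eq_iff hA.ne'] at hm; linarith
    have f2 : ⟪b, a⟫ = -⟪b, b⟫ := by
      rw [e2] at hm'; push_cast at hm'
      rw [hba, div_eq_iff hB.ne'] at hm'; linarith
    have hz : ⟪b + a, b + a⟫ = 0 := by
      rw [real_inner_add_add_self]
      linarith
    have hba0 : b + a = 0 := inner_self_eq_zero.mp hz
    exact absurd (eq_neg_of_add_eq_zero_left hba0) hne'

lemma sum_single (i : Fin n) :
    ∑ m, (if m = i then (1:ℝ) else 0) • D.simple m = D.simple i := by
  simp [ite_smul]

lemma coeff_unique {c d : Fin n → ℝ}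
    (h : ∑ m, c m • D.simple m = ∑ m, d m • D.simple m) : c = d := by
  have h0 : ∑ m, (c m - d m) • D.simple m = 0 := by
    simp [sub_smul, Finset.sum_sub_distrib, h]
  funext m
  have := Fintype.linearIndependent_iff.mp D.simple_indep _ h0 m
  linarith

lemma sum_comb (a b c : ℕ) (i j k : Fin n) :
    ∑ m, (((a * (if m = i then 1 else 0) + b * (if m = j then 1 else 0)
        + c * (if m = k then 1 else 0) : ℕ)) : ℝ) • D.simple m
      = (a:ℝ) • D.simple i + (b:ℝ) • D.simple j + (c:ℝ) • D.simple k := by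
  push_cast
  simp [add_smul, mul_ite, ite_smul, Finset.sum_add_distrib]

lemma ne_of_coeff {β γ : EuclideanSpace ℝ (Fin n)} {c d : Fin n → ℕ}
    (hb : β = ∑ m, (c m : ℝ) • D.simple m)
    (hg : γ = ∑ m, (d m : ℝ) • D.simple m)
    (hcd : ∃ k, c k ≠ d k) : β ≠ γ := by
  intro h
  obtain ⟨k, hk⟩ := hcd
  apply hk
  have hfun : (fun m => (c m : ℝ)) = (fun m => (d m : ℝ)) :=
    D.coeff_unique (by rw [← hb, ← hg, h])
  exact_mod_cast congrFun hfun k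

lemma mem_filt {β : EuclideanSpace ℝ (Fin n)} {i : Fin n} (hβ : β ∈ D.R)
    (c : Fin n → ℕ) (hc : β = ∑ m, (c m : ℝ) • D.simple m) (hci : 1 ≤ c i) :
    β ∈ D.Pos.filter (fun β => D.NS (β - D.simple i)) := by
  rw [Finset.mem_filter]
  constructor
  · rw [Pos, Finset.mem_filter]
    exact ⟨hβ, c, hc⟩
  · refine ⟨fun m => c m - (if m = i then 1 else 0), ?_⟩
    have key : ∀ m, ((c m - (if m = i then 1 else 0) : ℕ) : ℝ)
        = (c m : ℝ) - (if m = i then (1:ℝ) else 0) := by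
      intro m
      by_cases h : m = i
      · subst h; simp only [eq_self_iff_true, if_true]; rw [Nat.cast_sub hci]; simp
      · simp [h]
    calc β - D.simple i
        = ∑ m, (c m : ℝ) • D.simple m
          - ∑ m, (if m = i then (1:ℝ) else 0) • D.simple m := by
          rw [← hc, D.sum_single]
      _ = ∑ m, ((c m : ℝ) - (if m = i then (1:ℝ) else 0)) • D.simple m := by
          rw [← Finset.sum_sub_distrib]
          exact Finset.sum_congr rfl (fun m _ => (sub_smul _ _ _).symm)
      _ = ∑ m, ((c m - (if m = i then 1 else 0) : ℕ) : ℝ) • D.simple m := by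
          simp_rw [key]

lemma simple_ne_neg (i j : Fin n) : D.simple i ≠ -D.simple j := by
  intro h
  by_cases hij : i = j
  · subst hij
    have h2 : (2:ℝ) • D.simple i = 0 := by
      rw [two_smul]; nth_rewrite 2 [h]; abel
    have : D.simple i = 0 := by simpa using h2
    exact D.nonzero _ (D.simple_mem i) this
  · have hsum : D.simple i + D.simple j = 0 := by rw [h]; abel
    have e1 : D.simple i + D.simple j
        = ∑ m, ((if m = i then (1:ℝ) else 0) + (if m = j then 1 else 0)) • D.simple m := by
      simp [add_smul, Finset.sum_add_distrib, D.sum_single]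
    have e3 : ∑ m, ((if m = i then (1:ℝ) else 0) + (if m = j then 1 else 0)) • D.simple m
        = ∑ m, (0:ℝ) • D.simple m := by
      rw [← e1, hsum]; simp
    have := congrFun (D.coeff_unique e3) i
    simp [hij] at this

lemma inner_simple_nonpos {i j : Fin n} (hij : i ≠ j) :
    ⟪D.simple i, D.simple j⟫ ≤ 0 := by
  by_contra h
  push_neg at h
  have hneg : -D.simple j ∈ D.R := D.neg_mem (D.simple_mem j)
  have hinner : ⟪D.simple i, -D.simple j⟫ < 0 := by
    rw [inner_neg_right]; linarith
  have hne' : D.simple i ≠ -(-D.simple j) := by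
    rw [neg_neg]; exact fun h' => hij (D.simple_indep.injective h')
  have hmem : D.simple i + -D.simple j ∈ D.R :=
    D.add_mem' hneg (D.simple_mem i) hne' hinner
  have hmem' : D.simple i - D.simple j ∈ D.R := by
    rwa [← sub_eq_add_neg] at hmem
  have e1 : D.simple i - D.simple j
      = ∑ m, ((if m = i then (1:ℝ) else 0) - (if m = j then 1 else 0)) • D.simple m := by
    simp [sub_smul, Finset.sum_sub_distrib, D.sum_single]
  rcases D.base _ hmem' with ⟨c, hc⟩ | ⟨c, hc⟩
  · have e3 : ∑ m, ((if m = i then (1:ℝ) else 0) - (if m = j then 1 else 0)) • D.simple m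
        = ∑ m, (c m : ℝ) • D.simple m := by rw [← e1, ← hc]
    have h4 := congrFun (D.coeff_unique e3) j
    simp [Ne.symm hij] at h4
    have := Nat.cast_nonneg (α := ℝ) (c j)
    linarith [h4]
  · have hc2 : D.simple j - D.simple i = ∑ m, (c m : ℝ) • D.simple m := by
      rw [show D.simple j - D.simple i = -(D.simple i - D.simple j) by abel, hc, neg_neg]
    have e1' : D.simple j - D.simple i
        = ∑ m, ((if m = j then (1:ℝ) else 0) - (if m = i then 1 else 0)) • D.simple m := by
      simp [sub_smul, Finset.sum_sub_distrib, D.sum_single]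
    have e3 : ∑ m, ((if m = j then (1:ℝ) else 0) - (if m = i then 1 else 0)) • D.simple m
        = ∑ m, (c m : ℝ) • D.simple m := by rw [← e1', ← hc2]
    have h4 := congrFun (D.coeff_unique e3) i
    simp [hij] at h4
    have := Nat.cast_nonneg (α := ℝ) (c i)
    linarith [h4]

end RootSystemData

/-- In an irreducible root system of rank at least 2 that is not of type `A₂`, for every
simple root `α` there are at least `3` positive roots `β` with `α ≤ β`. -/
theorem at_least_three_positive_roots_above_each_simple_root
    {n : ℕ} (hn : 2 ≤ n) (D : RootSystemData n)
    (hirr : D.IsIrreducible) (hA2 : ¬ D.IsA2) (i : Fin n) :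
    3 ≤ (D.Pos.filter (fun β => D.NS (β - D.simple i))).card := by
  classical
  rw [RootSystemData.IsIrreducible] at hirr
  push_neg at hirr
  -- find a neighbour j of i
  obtain ⟨j, hji, hij_neg⟩ : ∃ j, j ≠ i ∧ ⟪D.simple i, D.simple j⟫ < 0 := by
    have hcard : 1 < Fintype.card (Fin n) := by simp; omega
    obtain ⟨j0, hj0⟩ := Fintype.exists_ne_of_one_lt_card hcard i
    obtain ⟨x, hx, y, hy, hxy⟩ := hirr {i} ⟨i, rfl⟩ ⟨j0, hj0⟩
    have hxi : x = i := hx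
    subst hxi
    exact ⟨y, hy, lt_of_le_of_ne (D.inner_simple_nonpos (Ne.symm hy)) hxy⟩
  have hij : i ≠ j := Ne.symm hji
  -- x = α i and y = α i + α j
  have hyR : D.simple i + D.simple j ∈ D.R :=
    D.add_mem' (D.simple_mem j) (D.simple_mem i) (D.simple_ne_neg i j) hij_neg
  have hx_eq : D.simple i
      = ∑ m, ((1 * (if m = i then 1 else 0) + 0 * (if m = j then 1 else 0)
          + 0 * (if m = j then 1 else 0) : ℕ) : ℝ) • D.simple m := by
    rw [D.sum_comb]; simp
  have hy_eq : D.simple i + D.simple j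
      = ∑ m, ((1 * (if m = i then 1 else 0) + 1 * (if m = j then 1 else 0)
          + 0 * (if m = j then 1 else 0) : ℕ) : ℝ) • D.simple m := by
    rw [D.sum_comb]; simp
  have hxmem := D.mem_filt (i := i) (D.simple_mem i) _ hx_eq (by simp)
  have hymem := D.mem_filt (i := i) hyR _ hy_eq (by simp)
  have hxy : D.simple i ≠ D.simple i + D.simple j :=
    D.ne_of_coeff hx_eq hy_eq ⟨j, by simp [hji]⟩
  -- finishing device
  have key : ∀ z ∈ D.Pos.filter (fun β => D.NS (β - D.simple i)),
      D.simple i ≠ z → D.simple i + D.simple j ≠ z →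
      3 ≤ (D.Pos.filter (fun β => D.NS (β - D.simple i))).card := by
    intro z hz hxz hyz
    have hsub : ({D.simple i, D.simple i + D.simple j, z} : Finset _)
        ⊆ D.Pos.filter (fun β => D.NS (β - D.simple i)) := by
      intro t ht
      simp only [Finset.mem_insert, Finset.mem_singleton] at ht
      rcases ht with rfl | rfl | rfl
      · exact hxmem
      · exact hymem
      · exact hz
    calc (3:ℕ) = ({D.simple i, D.simple i + D.simple j, z} : Finset _).card := by
          rw [Finset.card_insert_of_notMem (by simp [hxy, hxz]),
            Finset.card_insert_of_notMem (by simp [hyz]), Finset.card_singleton]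
      _ ≤ _ := Finset.card_le_card hsub
  by_cases hA : ∃ k, k ≠ i ∧ k ≠ j ∧ ⟪D.simple i, D.simple k⟫ ≠ 0
  · -- Case A : i has a second neighbour k
    obtain ⟨k, hki, hkj, hk0⟩ := hA
    have hik_neg : ⟪D.simple i, D.simple k⟫ < 0 :=
      lt_of_le_of_ne (D.inner_simple_nonpos (Ne.symm hki)) hk0
    have hzR : D.simple i + D.simple k ∈ D.R :=
      D.add_mem' (D.simple_mem k) (D.simple_mem i) (D.simple_ne_neg i k) hik_neg
    have hz_eq : D.simple i + D.simple k
        = ∑ m, ((1 * (if m = i then 1 else 0) + 0 * (if m = j then 1 else 0)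
            + 1 * (if m = k then 1 else 0) : ℕ) : ℝ) • D.simple m := by
      rw [D.sum_comb]; simp
    have hzmem := D.mem_filt (i := i) hzR _ hz_eq (by simp)
    exact key _ hzmem
      (D.ne_of_coeff hx_eq hz_eq ⟨k, by simp [hki]⟩)
      (D.ne_of_coeff hy_eq hz_eq ⟨j, by simp [hji, Ne.symm hkj]⟩)
  push_neg at hA
  obtain ⟨mi, hmi⟩ := D.crystallographic (D.simple i) (D.simple_mem i)
    (D.simple j) (D.simple_mem j)
  obtain ⟨mj, hmj⟩ := D.crystallographic (D.simple j) (D.simple_mem j)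
    (D.simple i) (D.simple_mem i)
  have hii := D.inner_self_pos' (D.simple_mem i)
  have hjj := D.inner_self_pos' (D.simple_mem j)
  have hji_neg : ⟪D.simple j, D.simple i⟫ < 0 := by
    rw [real_inner_comm]; exact hij_neg
  have hmi_neg : mi < 0 := by
    have : (mi:ℝ) < 0 := by
      rw [← hmi]; exact div_neg_of_neg_of_pos (by linarith) hii
    exact_mod_cast this
  have hmj_neg : mj < 0 := by
    have : (mj:ℝ) < 0 := by
      rw [← hmj]; exact div_neg_of_neg_of_pos (by linarith) hjj
    exact_mod_cast this
  by_cases hB : mi ≤ -2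
  · -- Case B : reflect α j in α i, getting α j + K α i with K ≥ 2
    have hr := D.reflect_mem (D.simple i) (D.simple_mem i) (D.simple j) (D.simple_mem j)
    rw [hmi] at hr
    set K := (-mi).toNat with hK
    have hK2 : 2 ≤ K := by omega
    have hKcast : ((mi:ℤ):ℝ) = -(K:ℝ) := by
      have h1 : mi = -(K:ℤ) := by omega
      rw [h1]; push_cast; ring
    have hz_eq : D.simple j - ((mi:ℤ):ℝ) • D.simple i
        = ∑ m, ((K * (if m = i then 1 else 0) + 1 * (if m = j then 1 else 0)
            + 0 * (if m = j then 1 else 0) : ℕ) : ℝ) • D.simple m := by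
      rw [D.sum_comb, hKcast]
      simp only [neg_smul, sub_neg_eq_add, Nat.cast_one, one_smul, Nat.cast_zero, zero_smul,
        add_zero]
      try abel
    have hzmem := D.mem_filt (i := i) hr _ hz_eq (by simp; omega)
    exact key _ hzmem
      (D.ne_of_coeff hx_eq hz_eq ⟨j, by simp [hji]⟩)
      (D.ne_of_coeff hy_eq hz_eq ⟨i, by simp [hij]; omega⟩)
  by_cases hC : mj ≤ -2
  · -- Case C : reflect α i in α j, getting α i + K α j with K ≥ 2
    have hr := D.reflect_mem (D.simple j) (D.simple_mem j) (D.simple i) (D.simple_mem i)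
    rw [hmj] at hr
    set K := (-mj).toNat with hK
    have hK2 : 2 ≤ K := by omega
    have hKcast : ((mj:ℤ):ℝ) = -(K:ℝ) := by
      have h1 : mj = -(K:ℤ) := by omega
      rw [h1]; push_cast; ring
    have hz_eq : D.simple i - ((mj:ℤ):ℝ) • D.simple j
        = ∑ m, ((1 * (if m = i then 1 else 0) + K * (if m = j then 1 else 0)
            + 0 * (if m = j then 1 else 0) : ℕ) : ℝ) • D.simple m := by
      rw [D.sum_comb, hKcast]
      simp only [neg_smul, sub_neg_eq_add, Nat.cast_one, one_smul, Nat.cast_zero, zero_smul,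
        add_zero]
      try abel
    have hzmem := D.mem_filt (i := i) hr _ hz_eq (by simp)
    exact key _ hzmem
      (D.ne_of_coeff hx_eq hz_eq ⟨j, by simp [hji]; omega⟩)
      (D.ne_of_coeff hy_eq hz_eq ⟨j, by simp [hji]; omega⟩)
  -- now mi = mj = -1
  have hmi1 : mi = -1 := by omega
  have hmj1 : mj = -1 := by omega
  -- n ≠ 2, else type A₂
  have hn2 : n ≠ 2 := by
    intro h2
    apply hA2
    refine ⟨h2, ?_⟩
    have huniv : ∀ t : Fin n, t = i ∨ t = j := by
      intro t
      by_contra ht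
      push_neg at ht
      have hle : ({i, j, t} : Finset (Fin n)).card ≤ n := by
        simpa using Finset.card_le_univ ({i, j, t} : Finset (Fin n))
      rw [Finset.card_insert_of_notMem (by simp [hij, Ne.symm ht.1]),
        Finset.card_insert_of_notMem (by simp [Ne.symm ht.2]),
        Finset.card_singleton] at hle
      omega
    intro i' j' hij'
    rcases huniv i' with rfl | rfl <;> rcases huniv j' with rfl | rfl
    · exact absurd rfl hij'
    · rw [hmi, hmi1]; norm_num
    · rw [hmj, hmj1]; norm_num
    · exact absurd rfl hij'
  -- Case D : n ≥ 3, find a neighbour k of j outside {i, j}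
  have hcompl : (({i, j} : Set (Fin n))ᶜ).Nonempty := by
    have : ∃ t : Fin n, t ∉ ({i, j} : Finset (Fin n)) := by
      by_contra hcon
      push_neg at hcon
      have : (Finset.univ : Finset (Fin n)).card ≤ ({i, j} : Finset (Fin n)).card :=
        Finset.card_le_card (fun t _ => hcon t)
      have h2 : ({i, j} : Finset (Fin n)).card ≤ 2 := Finset.card_insert_le _ _ |>.trans (by simp)
      simp at this
      omega
    obtain ⟨t, ht⟩ := this
    simp at ht
    exact ⟨t, by simp [ht.1, ht.2]⟩
  obtain ⟨x', hx', y', hy', hne0⟩ := hirr {i, j} ⟨i, by simp⟩ hcompl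
  simp only [Set.mem_compl_iff, Set.mem_insert_iff, Set.mem_singleton_iff] at hx' hy'
  push_neg at hy'
  obtain ⟨hy'i, hy'j⟩ := hy'
  rcases hx' with rfl | rfl
  · exact absurd (hA y' hy'i hy'j) hne0
  · -- x' = j, set k := y'
    have hjk_neg : ⟪D.simple x', D.simple y'⟫ < 0 :=
      lt_of_le_of_ne (D.inner_simple_nonpos (fun h => hy'j h.symm)) hne0
    have hinner : ⟪D.simple i + D.simple x', D.simple y'⟫ < 0 := by
      rw [inner_add_left, hA y' hy'i hy'j]
      linarith
    have hne' : D.simple i + D.simple x' ≠ -D.simple y' := by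
      intro h
      have hnegk : -D.simple y'
          = ∑ m, (-(if m = y' then (1:ℝ) else 0)) • D.simple m := by
        simp only [neg_smul]
        rw [Finset.sum_neg_distrib, D.sum_single]
      have e3 : ∑ m, ((1 * (if m = i then 1 else 0) + 1 * (if m = x' then 1 else 0)
            + 0 * (if m = x' then 1 else 0) : ℕ) : ℝ) • D.simple m
          = ∑ m, (-(if m = y' then (1:ℝ) else 0)) • D.simple m := by
        rw [← hnegk, ← h, D.sum_comb]; simp
      have h4 := congrFun (D.coeff_unique e3) i
      simp [hij, Ne.symm hy'i] at h4
    have hzR : (D.simple i + D.simple x') + D.simple y' ∈ D.R :=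
      D.add_mem' (D.simple_mem y') hyR hne' hinner
    have hz_eq : (D.simple i + D.simple x') + D.simple y'
        = ∑ m, ((1 * (if m = i then 1 else 0) + 1 * (if m = x' then 1 else 0)
            + 1 * (if m = y' then 1 else 0) : ℕ) : ℝ) • D.simple m := by
      rw [D.sum_comb]; simp
    have hzmem := D.mem_filt (i := i) hzR _ hz_eq (by simp [hij, Ne.symm hy'i])
    exact key _ hzmem
      (D.ne_of_coeff hx_eq hz_eq ⟨y', by simp [hy'i, hy'j]⟩)
      (D.ne_of_coeff hy_eq hz_eq ⟨y', by simp [hy'i, hy'j]⟩)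
end

section
/- Let ρ be the half sum of positive roots of an irreducible root system R of rank at least 2, not of type A_2. Then for every simple root α_i, the element s_{α_i}(2ρ) = 2ρ − 2α_i is a non-negative integer linear combination of simple roots in which every simple root appears with strictly positive coefficient. -/
open scoped RealInnerProductSpace
open scoped Classical

namespace RootSystemData

variable {n : ℕ} (D : RootSystemData n)

/-- real-coefficient representation of a vector in the base -/
def Rep (β : EuclideanSpace ℝ (Fin n)) (a : Fin n → ℝ) : Prop :=
  β = ∑ j, a j • D.simple j

lemma rep_unique {β : EuclideanSpace ℝ (Fin n)} {a b : Fin n → ℝ}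
    (ha : D.Rep β a) (hb : D.Rep β b) : a = b := by
  have hli := Fintype.linearIndependent_iff.mp D.simple_indep
  funext j
  have h : ∑ k, (a k - b k) • D.simple k = 0 := by
    rw [Rep] at ha hb
    simp only [sub_smul, Finset.sum_sub_distrib, ← ha, ← hb, sub_self]
  have := hli (fun k => a k - b k) h j
  linarith

/-- canonical natural coefficients of a positive root -/
noncomputable def coeff (β : EuclideanSpace ℝ (Fin n)) : Fin n → ℕ :=
  if h : ∃ c : Fin n → ℕ, β = ∑ j, (c j : ℝ) • D.simple j then h.choose else 0

lemma coeff_rep {β : EuclideanSpace ℝ (Fin n)}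
    (h : ∃ c : Fin n → ℕ, β = ∑ j, (c j : ℝ) • D.simple j) :
    D.Rep β (fun j => (D.coeff β j : ℝ)) := by
  have : D.coeff β = h.choose := by rw [coeff, dif_pos h]
  rw [Rep, this]
  exact h.choose_spec

lemma pos_of_rep {β : EuclideanSpace ℝ (Fin n)} {a : Fin n → ℝ}
    (hβ : β ∈ D.R) (ha : D.Rep β a) {j0 : Fin n} (hj0 : 0 < a j0) :
    β ∈ D.Pos ∧ ∀ j, (D.coeff β j : ℝ) = a j := by
  rcases D.base β hβ with ⟨c, hc⟩ | ⟨c, hc⟩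
  · have hPos : β ∈ D.Pos := Finset.mem_filter.mpr ⟨hβ, c, hc⟩
    have h2 := D.rep_unique (D.coeff_rep ⟨c, hc⟩) ha
    exact ⟨hPos, fun j => congrFun h2 j⟩
  · exfalso
    have hrep : D.Rep β (fun j => -(c j : ℝ)) := by
      rw [Rep, hc, ← Finset.sum_neg_distrib]
      simp [neg_smul]
    have h2 := congrFun (D.rep_unique hrep ha) j0
    rw [← h2] at hj0
    have : (0:ℝ) ≤ (c j0 : ℝ) := Nat.cast_nonneg _
    linarith

lemma simple_inner_self_pos (x : Fin n) : 0 < ⟪D.simple x, D.simple x⟫ := by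
  have h := D.nonzero _ (D.simple_mem x)
  exact lt_of_not_ge fun hle => h (real_inner_self_nonpos.mp hle)

lemma rep_single (j : Fin n) :
    D.Rep (D.simple j) (fun x => if x = j then 1 else 0) := by
  rw [Rep]
  simp [ite_smul, Finset.sum_ite_eq']

lemma rep_pair {i j : Fin n} (s t : ℝ) :
    D.Rep (s • D.simple i + t • D.simple j)
      (fun x => (if x = i then s else 0) + (if x = j then t else 0)) := by
  rw [Rep]
  simp [add_smul, Finset.sum_add_distrib, ite_smul, Finset.sum_ite_eq']

lemma rep_triple {i j l : Fin n} (s t u : ℝ) :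
    D.Rep (s • D.simple i + t • D.simple j + u • D.simple l)
      (fun x => (if x = i then s else 0) + (if x = j then t else 0)
        + (if x = l then u else 0)) := by
  rw [Rep]
  simp [add_smul, Finset.sum_add_distrib, ite_smul, Finset.sum_ite_eq']

/-- For distinct simple roots with nonzero inner product, the Cartan integer is a
negative integer. -/
lemma cartan_neg {i j : Fin n} (hij : j ≠ i)
    (h : ⟪D.simple j, D.simple i⟫ ≠ 0) :
    ∃ k : ℕ, 1 ≤ k ∧
      2 * ⟪D.simple j, D.simple i⟫ / ⟪D.simple i, D.simple i⟫ = -(k : ℝ) := by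
  obtain ⟨m, hm⟩ := D.crystallographic _ (D.simple_mem i) _ (D.simple_mem j)
  have hpos := D.simple_inner_self_pos i
  have hmne : (m : ℝ) ≠ 0 := by
    rw [← hm]
    exact div_ne_zero (by simpa using h) (ne_of_gt hpos)
  have hmlt : m < 0 := by
    by_contra hge
    push_neg at hge
    have hm1 : 1 ≤ m := lt_of_le_of_ne hge (by exact_mod_cast (Ne.symm hmne))
    -- β := s_i (α_j) = α_j - m • α_i is a root with mixed signs: contradiction
    have hβR := D.reflect_mem _ (D.simple_mem i) _ (D.simple_mem j)
    rw [hm] at hβR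
    have hrep : D.Rep (D.simple j - (m : ℝ) • D.simple i)
        (fun x => (if x = i then -(m:ℝ) else 0) + (if x = j then 1 else 0)) := by
      have := D.rep_pair (i := i) (j := j) (-(m:ℝ)) 1
      simpa [neg_smul, sub_eq_add_neg, add_comm] using this
    have hj0 : (0:ℝ) < (if (j:Fin n) = i then -(m:ℝ) else 0) + (if j = j then 1 else 0) := by
      simp [hij]
    obtain ⟨_, hco⟩ := D.pos_of_rep hβR hrep hj0
    have := hco i
    simp [(show ¬ (i = j) from fun hh => hij hh.symm)] at this
    have : (0:ℝ) ≤ -(m:ℝ) := this ▸ Nat.cast_nonneg _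
    have : (0:ℝ) < (m:ℝ) := by exact_mod_cast hm1
    linarith
  refine ⟨(-m).toNat, by omega, ?_⟩
  rw [hm]
  have h1 : (((-m).toNat : ℤ) : ℝ) = ((-m : ℤ) : ℝ) := by
    rw [Int.toNat_of_nonneg (by omega)]
  push_cast at h1 ⊢
  linarith

end RootSystemData
/-- Let `ρ` be the half sum of positive roots of an irreducible root system of rank
at least 2, not of type `A₂`.  Then for every simple root `αᵢ`, the element
`s_{αᵢ}(2ρ) = 2ρ - 2αᵢ` is a non-negative integral combination of simple roots in which
every simple root appears with strictly positive coefficient. -/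
theorem reflection_of_two_rho_strictly_positive
    {n : ℕ} (hn : 2 ≤ n) (D : RootSystemData n)
    (hirr : D.IsIrreducible) (hA2 : ¬ D.IsA2) (i : Fin n) :
    ∃ c : Fin n → ℕ, (∀ j, 0 < c j) ∧
      (∑ β ∈ D.Pos, β) - (2 : ℝ) • D.simple i = ∑ j, (c j : ℝ) • D.simple j := by
  classical
  -- coefficients of simple roots
  have hsimple : ∀ j : Fin n, D.simple j ∈ D.Pos ∧
      ∀ x, (D.coeff (D.simple j) x : ℝ) = if x = j then 1 else 0 :=
    fun j => D.pos_of_rep (D.simple_mem j) (D.rep_single j) (j0 := j) (by simp)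
  set C : Fin n → ℕ := fun j => ∑ β ∈ D.Pos, D.coeff β j with hC
  have hrho : (∑ β ∈ D.Pos, β) = ∑ j, (C j : ℝ) • D.simple j := by
    have h1 : ∀ β ∈ D.Pos, β = ∑ j, (D.coeff β j : ℝ) • D.simple j := fun β hβ =>
      D.coeff_rep (Finset.mem_filter.mp hβ).2
    rw [Finset.sum_congr rfl h1, Finset.sum_comm]
    refine Finset.sum_congr rfl fun j _ => ?_
    rw [hC]
    push_cast
    rw [Finset.sum_smul]
  have hcoeff_simple : ∀ j : Fin n, D.coeff (D.simple j) j = 1 := by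
    intro j
    have h := (hsimple j).2 j
    simp only [if_pos rfl] at h
    exact_mod_cast h
  have hcoeff_simple0 : ∀ x y : Fin n, x ≠ y → D.coeff (D.simple y) x = 0 := by
    intro x y hxy
    have h := (hsimple y).2 x
    rw [if_neg hxy] at h
    exact_mod_cast h
  have hC1 : ∀ j, 1 ≤ C j := by
    intro j
    calc 1 = D.coeff (D.simple j) j := (hcoeff_simple j).symm
    _ ≤ C j := Finset.single_le_sum (f := fun β => D.coeff β j)
        (fun _ _ => Nat.zero_le _) (hsimple j).1
  have pairbound : ∀ x y : EuclideanSpace ℝ (Fin n), x ∈ D.Pos → y ∈ D.Pos → x ≠ y →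
      D.coeff x i + D.coeff y i ≤ C i := by
    intro x y hx hy hxy
    have hsub : ({x, y} : Finset (EuclideanSpace ℝ (Fin n))) ⊆ D.Pos := by
      intro z hz
      rcases Finset.mem_insert.mp hz with h | h
      · rwa [h]
      · rw [Finset.mem_singleton.mp h]; exact hy
    calc D.coeff x i + D.coeff y i
        = ∑ β ∈ ({x, y} : Finset (EuclideanSpace ℝ (Fin n))), D.coeff β i :=
          (Finset.sum_pair (f := fun β => D.coeff β i) hxy).symm
      _ ≤ C i := Finset.sum_le_sum_of_subset hsub
  have triplebound : ∀ x y z : EuclideanSpace ℝ (Fin n), x ∈ D.Pos → y ∈ D.Pos →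
      z ∈ D.Pos → x ≠ y → x ≠ z → y ≠ z →
      D.coeff x i + D.coeff y i + D.coeff z i ≤ C i := by
    intro x y z hx hy hz hxy hxz hyz
    have hsub : ({x, y, z} : Finset (EuclideanSpace ℝ (Fin n))) ⊆ D.Pos := by
      intro w hw
      rcases Finset.mem_insert.mp hw with h | hw
      · rwa [h]
      rcases Finset.mem_insert.mp hw with h | hw
      · rwa [h]
      · rw [Finset.mem_singleton.mp hw]; exact hz
    have hsum : ∑ β ∈ ({x, y, z} : Finset (EuclideanSpace ℝ (Fin n))), D.coeff β i
        = D.coeff x i + (D.coeff y i + D.coeff z i) := by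
      rw [Finset.sum_insert (by simp [hxy, hxz]),
        Finset.sum_pair (f := fun β => D.coeff β i) hyz]
    calc D.coeff x i + D.coeff y i + D.coeff z i
        = ∑ β ∈ ({x, y, z} : Finset (EuclideanSpace ℝ (Fin n))), D.coeff β i := by
          rw [hsum, add_assoc]
      _ ≤ C i := Finset.sum_le_sum_of_subset hsub
  -- find a neighbour j of i
  have hex : ∃ j : Fin n, j ≠ i ∧ ⟪D.simple j, D.simple i⟫ ≠ 0 := by
    by_contra hcon
    push_neg at hcon
    apply hirr
    refine ⟨{i}, ⟨i, rfl⟩, ?_, ?_⟩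
    · obtain ⟨j, hj⟩ := Fintype.exists_ne_of_one_lt_card
        (by simp only [Fintype.card_fin]; omega) i
      exact ⟨j, by simp [hj]⟩
    · intro x hx y hy
      simp only [Set.mem_singleton_iff] at hx
      simp only [Set.mem_compl_iff, Set.mem_singleton_iff] at hy
      subst hx
      rw [real_inner_comm]
      exact hcon y hy
  obtain ⟨j, hji, hinner⟩ := hex
  have hij' : ¬ (i = j) := fun h => hji h.symm
  obtain ⟨k, hk1, hkval⟩ := D.cartan_neg hji hinner
  -- β = k•αᵢ + αⱼ is a positive root
  have hβR := D.reflect_mem _ (D.simple_mem i) _ (D.simple_mem j)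
  rw [hkval] at hβR
  have hβeq : D.simple j - (-(k : ℝ)) • D.simple i
      = (k : ℝ) • D.simple i + (1 : ℝ) • D.simple j := by
    rw [neg_smul, sub_neg_eq_add, one_smul, add_comm]
  rw [hβeq] at hβR
  have hβrep := D.rep_pair (i := i) (j := j) (k : ℝ) 1
  have hβ := D.pos_of_rep hβR hβrep (j0 := j) (by simp [hji])
  have hβi : D.coeff ((k : ℝ) • D.simple i + (1 : ℝ) • D.simple j) i = k := by
    have h := hβ.2 i
    rw [if_pos rfl, if_neg hij', add_zero] at h
    exact_mod_cast h
  have hβj : D.coeff ((k : ℝ) • D.simple i + (1 : ℝ) • D.simple j) j = 1 := by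
    have h := hβ.2 j
    rw [if_neg hji, if_pos rfl, zero_add] at h
    exact_mod_cast h
  have hneβ : D.simple i ≠ (k : ℝ) • D.simple i + (1 : ℝ) • D.simple j := by
    intro he
    have h0 := hcoeff_simple0 j i hji
    rw [he] at h0
    omega
  -- main counting claim
  have key : 3 ≤ C i := by
    by_cases hk2 : 2 ≤ k
    · have := pairbound _ _ (hsimple i).1 hβ.1 hneβ
      rw [hcoeff_simple, hβi] at this
      omega
    · have hk : k = 1 := by omega
      have hinner' : ⟪D.simple i, D.simple j⟫ ≠ 0 := by
        rwa [real_inner_comm]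
      obtain ⟨k', hk'1, hk'val⟩ := D.cartan_neg (Ne.symm hji) hinner'
      by_cases hk'2 : 2 ≤ k'
      · -- γ = αᵢ + k'•αⱼ
        have hγR := D.reflect_mem _ (D.simple_mem j) _ (D.simple_mem i)
        rw [hk'val] at hγR
        have hγeq : D.simple i - (-(k' : ℝ)) • D.simple j
            = (1 : ℝ) • D.simple i + (k' : ℝ) • D.simple j := by
          rw [neg_smul, sub_neg_eq_add, one_smul]
        rw [hγeq] at hγR
        have hγrep := D.rep_pair (i := i) (j := j) (1 : ℝ) (k' : ℝ)
        have hγ := D.pos_of_rep hγR hγrep (j0 := i) (by simp [hij'])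
        have hγi : D.coeff ((1 : ℝ) • D.simple i + (k' : ℝ) • D.simple j) i = 1 := by
          have h := hγ.2 i
          rw [if_pos rfl, if_neg hij', add_zero] at h
          exact_mod_cast h
        have hγj : D.coeff ((1 : ℝ) • D.simple i + (k' : ℝ) • D.simple j) j = k' := by
          have h := hγ.2 j
          rw [if_neg hji, if_pos rfl, zero_add] at h
          exact_mod_cast h
        have hneγ : D.simple i ≠ (1 : ℝ) • D.simple i + (k' : ℝ) • D.simple j := by
          intro he
          have h0 := hcoeff_simple0 j i hji
          rw [he] at h0
          omega
        have hneβγ : (k : ℝ) • D.simple i + (1 : ℝ) • D.simple j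
            ≠ (1 : ℝ) • D.simple i + (k' : ℝ) • D.simple j := by
          intro he
          rw [he] at hβj
          omega
        have := triplebound _ _ _ (hsimple i).1 hβ.1 hγ.1 hneβ hneγ hneβγ
        rw [hcoeff_simple, hβi, hγi] at this
        omega
      · have hk' : k' = 1 := by omega
        by_cases hl : ∃ l : Fin n, l ≠ i ∧ l ≠ j ∧
            (⟪D.simple l, D.simple i⟫ ≠ 0 ∨ ⟪D.simple l, D.simple j⟫ ≠ 0)
        · obtain ⟨l, hli, hlj, hcase⟩ := hl
          have hil' : ¬ (i = l) := fun h => hli h.symm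
          have hjl' : ¬ (j = l) := fun h => hlj h.symm
          by_cases hli0 : ⟪D.simple l, D.simple i⟫ ≠ 0
          · -- β' = k''•αᵢ + α_l
            obtain ⟨k'', hk''1, hk''val⟩ := D.cartan_neg hli hli0
            have hβ'R := D.reflect_mem _ (D.simple_mem i) _ (D.simple_mem l)
            rw [hk''val] at hβ'R
            have hβ'eq : D.simple l - (-(k'' : ℝ)) • D.simple i
                = (k'' : ℝ) • D.simple i + (1 : ℝ) • D.simple l := by
              rw [neg_smul, sub_neg_eq_add, one_smul, add_comm]
            rw [hβ'eq] at hβ'R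
            have hβ'rep := D.rep_pair (i := i) (j := l) (k'' : ℝ) 1
            have hβ' := D.pos_of_rep hβ'R hβ'rep (j0 := l) (by simp [hli])
            have hβ'i : D.coeff ((k'' : ℝ) • D.simple i + (1 : ℝ) • D.simple l) i
                = k'' := by
              have h := hβ'.2 i
              rw [if_pos rfl, if_neg hil', add_zero] at h
              exact_mod_cast h
            have hβ'j : D.coeff ((k'' : ℝ) • D.simple i + (1 : ℝ) • D.simple l) j
                = 0 := by
              have h := hβ'.2 j
              rw [if_neg hji, if_neg hjl', add_zero] at h
              exact_mod_cast h
            have hβ'l : D.coeff ((k'' : ℝ) • D.simple i + (1 : ℝ) • D.simple l) l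
                = 1 := by
              have h := hβ'.2 l
              rw [if_neg hli, if_pos rfl, zero_add] at h
              exact_mod_cast h
            have hneβ' : D.simple i
                ≠ (k'' : ℝ) • D.simple i + (1 : ℝ) • D.simple l := by
              intro he
              have h0 := hcoeff_simple0 l i hli
              rw [he] at h0
              omega
            have hneββ' : (k : ℝ) • D.simple i + (1 : ℝ) • D.simple j
                ≠ (k'' : ℝ) • D.simple i + (1 : ℝ) • D.simple l := by
              intro he
              rw [he] at hβj
              omega
            have := triplebound _ _ _ (hsimple i).1 hβ.1 hβ'.1 hneβ hneβ' hneββ'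
            rw [hcoeff_simple, hβi, hβ'i] at this
            omega
          · push_neg at hli0
            have hlj0 : ⟪D.simple l, D.simple j⟫ ≠ 0 := by tauto
            have hjl0 : ⟪D.simple j, D.simple l⟫ ≠ 0 := by
              rwa [real_inner_comm]
            obtain ⟨p, hp1, hpval⟩ := D.cartan_neg
              (i := l) (j := j) (Ne.symm hlj) hjl0
            -- γ = s_l(β) = αᵢ + αⱼ + p•α_l
            have hγR := D.reflect_mem _ (D.simple_mem l) _ hβR
            have hli0' : ⟪D.simple i, D.simple l⟫ = 0 := by
              rw [real_inner_comm]; exact hli0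
            have hβinner : ⟪((k : ℝ) • D.simple i + (1 : ℝ) • D.simple j :
                EuclideanSpace ℝ (Fin n)), D.simple l⟫
                = ⟪D.simple j, D.simple l⟫ := by
              rw [inner_add_left, real_inner_smul_left, real_inner_smul_left, hli0']
              ring
            rw [show 2 * ⟪((k : ℝ) • D.simple i + (1 : ℝ) • D.simple j :
                EuclideanSpace ℝ (Fin n)), D.simple l⟫ / ⟪D.simple l, D.simple l⟫
                = -(p : ℝ) from by rw [hβinner]; exact hpval] at hγR
            have hγeq : ((k : ℝ) • D.simple i + (1 : ℝ) • D.simple j)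
                - (-(p : ℝ)) • D.simple l
                = (k : ℝ) • D.simple i + (1 : ℝ) • D.simple j
                  + (p : ℝ) • D.simple l := by
              rw [neg_smul, sub_neg_eq_add]
            rw [hγeq] at hγR
            have hγrep := D.rep_triple (i := i) (j := j) (l := l)
              (k : ℝ) (1 : ℝ) (p : ℝ)
            have hγ := D.pos_of_rep hγR hγrep (j0 := j) (by simp [hji, hjl'])
            have hγi : D.coeff ((k : ℝ) • D.simple i + (1 : ℝ) • D.simple j
                + (p : ℝ) • D.simple l) i = k := by
              have h := hγ.2 i
              rw [if_pos rfl, if_neg hij', if_neg hil', add_zero, add_zero] at h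
              exact_mod_cast h
            have hγj : D.coeff ((k : ℝ) • D.simple i + (1 : ℝ) • D.simple j
                + (p : ℝ) • D.simple l) j = 1 := by
              have h := hγ.2 j
              rw [if_neg hji, if_pos rfl, if_neg hjl', zero_add, add_zero] at h
              exact_mod_cast h
            have hγl : D.coeff ((k : ℝ) • D.simple i + (1 : ℝ) • D.simple j
                + (p : ℝ) • D.simple l) l = p := by
              have h := hγ.2 l
              rw [if_neg hli, if_neg hlj, if_pos rfl, zero_add, zero_add] at h
              exact_mod_cast h
            have hβl : D.coeff ((k : ℝ) • D.simple i + (1 : ℝ) • D.simple j) l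
                = 0 := by
              have h := hβ.2 l
              rw [if_neg hli, if_neg hlj, add_zero] at h
              exact_mod_cast h
            have hneγ : D.simple i ≠ (k : ℝ) • D.simple i + (1 : ℝ) • D.simple j
                + (p : ℝ) • D.simple l := by
              intro he
              have h0 := hcoeff_simple0 j i hji
              rw [he] at h0
              omega
            have hneβγ : (k : ℝ) • D.simple i + (1 : ℝ) • D.simple j
                ≠ (k : ℝ) • D.simple i + (1 : ℝ) • D.simple j
                  + (p : ℝ) • D.simple l := by
              intro he
              rw [he] at hβl
              omega
            have := triplebound _ _ _ (hsimple i).1 hβ.1 hγ.1 hneβ hneγ hneβγ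
            rw [hcoeff_simple, hβi, hγi] at this
            omega
        · -- no third index: the system is A₂, contradiction
          exfalso
          push_neg at hl
          have hall : ∀ x : Fin n, x = i ∨ x = j := by
            by_contra hc
            push_neg at hc
            obtain ⟨x, hxi, hxj⟩ := hc
            apply hirr
            refine ⟨{i, j}, ⟨i, Or.inl rfl⟩, ⟨x, ?_⟩, ?_⟩
            · simp [hxi, hxj]
            · intro a ha b hb
              simp only [Set.mem_compl_iff, Set.mem_insert_iff,
                Set.mem_singleton_iff, not_or] at hb
              obtain ⟨hbi, hbj⟩ := hb
              have hb2 := hl b hbi hbj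
              rcases ha with ha | ha
              · subst ha; rw [real_inner_comm]; exact hb2.1
              · simp only [Set.mem_singleton_iff] at ha
                subst ha; rw [real_inner_comm]; exact hb2.2
          have hn2 : n = 2 := by
            have hsub : (Finset.univ : Finset (Fin n)) ⊆ {i, j} := by
              intro x _
              rcases hall x with h | h <;> simp [h]
            have hcard := Finset.card_le_card hsub
            have hc2 : ({i, j} : Finset (Fin n)).card ≤ 2 :=
              (Finset.card_insert_le _ _).trans (by simp)
            simp only [Finset.card_univ, Fintype.card_fin] at hcard
            omega
          apply hA2
          refine ⟨hn2, fun a b hab => ?_⟩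
          rcases hall a with ha | ha <;> rcases hall b with hb | hb <;>
            subst ha <;> subst hb
          · exact absurd rfl hab
          · rw [hkval, hk]; norm_num
          · rw [hk'val, hk']; norm_num
          · exact absurd rfl hab
  -- assemble the answer
  refine ⟨fun j => if j = i then C i - 2 else C j, ?_, ?_⟩
  · intro j
    dsimp only
    by_cases h : j = i
    · rw [if_pos h]
      have h3 := key
      omega
    · rw [if_neg h]; exact hC1 j
  · rw [hrho]
    have hcast : ∀ j : Fin n, (((if j = i then C i - 2 else C j : ℕ)) : ℝ)
        = (C j : ℝ) - (if j = i then 2 else 0) := by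
      intro j
      by_cases h : j = i
      · subst h
        rw [if_pos rfl, if_pos rfl, Nat.cast_sub (by omega)]
        norm_num
      · rw [if_neg h, if_neg h, sub_zero]
    rw [show (∑ j, (((if j = i then C i - 2 else C j : ℕ)) : ℝ) • D.simple j)
        = ∑ j, (((C j : ℝ) - (if j = i then 2 else 0)) • D.simple j) from
      Finset.sum_congr rfl fun j _ => by rw [hcast j]]
    simp only [sub_smul, Finset.sum_sub_distrib, ite_smul, zero_smul,
      Finset.sum_ite_eq', Finset.mem_univ, if_pos]
end

section
/- For an irreducible root system R of rank n ≥ 2 not of type A_2, there exists a regular dominant weight χ lying in the monoid ℕS of non-negative integer combinations of simple roots such that s_{α_i}(χ) ≥ 0 (i.e., s_{α_i}(χ) ∈ ℕS) for every simple reflection s_{α_i}. -/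
open scoped RealInnerProductSpace
open scoped Classical

namespace RootSystemData

variable {n : ℕ} (D : RootSystemData n)

/-- Uniqueness of coefficients in the simple basis. -/
lemma coeff_eq {c d : Fin n → ℝ}
    (h : ∑ i, c i • D.simple i = ∑ i, d i • D.simple i) : c = d := by
  funext i
  have h0 : ∑ i, (c i - d i) • D.simple i = 0 := by
    simp [sub_smul, Finset.sum_sub_distrib, h]
  have := Fintype.linearIndependent_iff.mp D.simple_indep (fun i => c i - d i) h0 i
  linarith

lemma simple_ne (i : Fin n) : D.simple i ≠ 0 := D.simple_indep.ne_zero i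

lemma inner_simple_pos (i : Fin n) : 0 < ⟪D.simple i, D.simple i⟫ :=
  lt_of_le_of_ne real_inner_self_nonneg
    (Ne.symm (inner_self_ne_zero.mpr (D.simple_ne i)))

/-- The simple reflection applied to a vector. -/
noncomputable def refl (i : Fin n) (β : EuclideanSpace ℝ (Fin n)) :
    EuclideanSpace ℝ (Fin n) :=
  β - ((2 * ⟪β, D.simple i⟫ / ⟪D.simple i, D.simple i⟫) • D.simple i)

lemma refl_inner (i : Fin n) (β : EuclideanSpace ℝ (Fin n)) :
    ⟪D.refl i β, D.simple i⟫ = -⟪β, D.simple i⟫ := by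
  have h := (D.inner_simple_pos i).ne'
  rw [refl, inner_sub_left, real_inner_smul_left, div_mul_cancel₀ _ h]
  ring

lemma refl_invol (i : Fin n) (β : EuclideanSpace ℝ (Fin n)) :
    D.refl i (D.refl i β) = β := by
  have h1 := D.refl_inner i β
  rw [refl, h1, refl]
  module

lemma refl_simple (i : Fin n) : D.refl i (D.simple i) = -D.simple i := by
  have h := (D.inner_simple_pos i).ne'
  rw [refl, mul_div_assoc, div_self h, mul_one]
  module

lemma refl_mem {i : Fin n} {β : EuclideanSpace ℝ (Fin n)} (hβ : β ∈ D.R) :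
    D.refl i β ∈ D.R :=
  D.reflect_mem (D.simple i) (D.simple_mem i) β hβ

lemma mem_Pos {β : EuclideanSpace ℝ (Fin n)} :
    β ∈ D.Pos ↔ β ∈ D.R ∧ D.NS β := by
  simp [Pos, NS, Finset.mem_filter]

lemma simple_NS (i : Fin n) : D.NS (D.simple i) := by
  refine ⟨fun j => if j = i then 1 else 0, ?_⟩
  simp [ite_smul]

lemma simple_mem_Pos (i : Fin n) : D.simple i ∈ D.Pos :=
  D.mem_Pos.mpr ⟨D.simple_mem i, D.simple_NS i⟩

lemma neg_simple_not_NS (i : Fin n) : ¬ D.NS (-D.simple i) := by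
  rintro ⟨c, hc⟩
  have hneg : -D.simple i = ∑ j, (if j = i then (-1:ℝ) else 0) • D.simple j := by
    simp [ite_smul]
  have heq := D.coeff_eq ((hc.symm.trans hneg))
  have h2 := congrFun heq i
  simp only [eq_self_iff_true, if_true] at h2
  have h1 : (0:ℝ) ≤ (c i : ℝ) := Nat.cast_nonneg _
  rw [h2] at h1
  linarith

/-- A positive root of the form `t • αᵢ` must be `αᵢ` itself. -/
lemma pos_smul_simple {i : Fin n} {β : EuclideanSpace ℝ (Fin n)} (hβ : β ∈ D.Pos)
    {c : Fin n → ℕ} (hc : β = ∑ k, (c k : ℝ) • D.simple k)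
    (hcj : ∀ j, j ≠ i → c j = 0) : β = D.simple i := by
  have hβR : β ∈ D.R := (D.mem_Pos.mp hβ).1
  have hβi : β = (c i : ℝ) • D.simple i := by
    rw [hc, Finset.sum_eq_single i]
    · intro j _ hj; simp [hcj j hj]
    · simp
  rcases D.reduced (D.simple i) (D.simple_mem i) (c i) (hβi ▸ hβR) with h1 | h1
  · rw [hβi, h1, one_smul]
  · exfalso
    have : (0:ℝ) ≤ (c i : ℝ) := Nat.cast_nonneg _
    rw [h1] at this; linarith

/-- The simple reflection maps `Pos \ {αᵢ}` into itself. -/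
lemma refl_maps_pos {i : Fin n} {β : EuclideanSpace ℝ (Fin n)}
    (hβ : β ∈ D.Pos) (hne : β ≠ D.simple i) :
    D.refl i β ∈ D.Pos ∧ D.refl i β ≠ D.simple i := by
  obtain ⟨hβR, c, hc⟩ := D.mem_Pos.mp hβ
  have hrR : D.refl i β ∈ D.R := D.refl_mem hβR
  set k : ℝ := 2 * ⟪β, D.simple i⟫ / ⟪D.simple i, D.simple i⟫ with hk
  have hrexp : D.refl i β = ∑ j, ((c j : ℝ) - (if j = i then k else 0)) • D.simple j := by
    simp only [sub_smul, Finset.sum_sub_distrib, ite_smul, zero_smul,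
      Finset.sum_ite_eq', Finset.mem_univ, if_true]
    rw [refl, ← hc]
  have hrNS : D.NS (D.refl i β) := by
    rcases D.base _ hrR with h | ⟨d, hd⟩
    · exact h
    · exfalso
      have hd' : D.refl i β = ∑ j, (-(d j : ℝ)) • D.simple j := by
        rw [hd, ← Finset.sum_neg_distrib]
        simp
      have heq := D.coeff_eq (hrexp.symm.trans hd')
      have hcj : ∀ j, j ≠ i → c j = 0 := by
        intro j hj
        have h2 := congrFun heq j
        simp only [if_neg hj, sub_zero] at h2
        have h3 : (0:ℝ) ≤ (c j : ℝ) := Nat.cast_nonneg _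
        have h4 : (0:ℝ) ≤ (d j : ℝ) := Nat.cast_nonneg _
        have h5 : (c j : ℝ) = 0 := by linarith
        exact_mod_cast h5
      exact hne (D.pos_smul_simple hβ hc hcj)
  refine ⟨D.mem_Pos.mpr ⟨hrR, hrNS⟩, fun habs => ?_⟩
  have hβeq : β = -D.simple i := by
    have h1 : β = D.refl i (D.refl i β) := (D.refl_invol i β).symm
    rw [habs, D.refl_simple] at h1
    exact h1
  exact D.neg_simple_not_NS i (hβeq ▸ ⟨c, hc⟩)

/-- `⟪2ρ, αᵢ⟫ = ⟪αᵢ, αᵢ⟫`. -/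
lemma sum_pos_inner (i : Fin n) :
    ⟪∑ β ∈ D.Pos, β, D.simple i⟫ = ⟪D.simple i, D.simple i⟫ := by
  rw [← Finset.add_sum_erase _ _ (D.simple_mem_Pos i), inner_add_left, sum_inner]
  have key : ∑ β ∈ D.Pos.erase (D.simple i), ⟪β, D.simple i⟫
      = ∑ β ∈ D.Pos.erase (D.simple i), -⟪β, D.simple i⟫ := by
    refine Finset.sum_nbij' (D.refl i) (D.refl i) ?_ ?_ ?_ ?_ ?_
    · intro β hβ
      rw [Finset.mem_erase] at hβ ⊢
      obtain ⟨h1, h2⟩ := D.refl_maps_pos hβ.2 hβ.1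
      exact ⟨h2, h1⟩
    · intro β hβ
      rw [Finset.mem_erase] at hβ ⊢
      obtain ⟨h1, h2⟩ := D.refl_maps_pos hβ.2 hβ.1
      exact ⟨h2, h1⟩
    · intro β _; exact D.refl_invol i β
    · intro β _; exact D.refl_invol i β
    · intro β _; rw [D.refl_inner, neg_neg]
  have hz : ∑ β ∈ D.Pos.erase (D.simple i), ⟪β, D.simple i⟫ = 0 := by
    rw [Finset.sum_neg_distrib] at key
    linarith
  rw [hz, add_zero]

lemma NS_zero : D.NS 0 := ⟨0, by simp⟩

lemma NS_add {μ ν : EuclideanSpace ℝ (Fin n)} (hμ : D.NS μ) (hν : D.NS ν) :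
    D.NS (μ + ν) := by
  obtain ⟨c, hc⟩ := hμ; obtain ⟨d, hd⟩ := hν
  refine ⟨c + d, ?_⟩
  rw [hc, hd, ← Finset.sum_add_distrib]
  refine Finset.sum_congr rfl (fun j _ => ?_)
  have : ((c + d) j : ℝ) = (c j : ℝ) + (d j : ℝ) := by push_cast [Pi.add_apply]; ring
  rw [this, add_smul]

lemma NS_sum {s : Finset (EuclideanSpace ℝ (Fin n))}
    (h : ∀ β ∈ s, D.NS β) : D.NS (∑ β ∈ s, β) :=
  Finset.sum_induction _ _ (fun _ _ => D.NS_add) D.NS_zero h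

/-- Existence of an extra positive root with `αᵢ`-coefficient at least one. -/
lemma exists_extra_root (hirr : D.IsIrreducible) (hn : 2 ≤ n) (i : Fin n) :
    ∃ β ∈ D.Pos, β ≠ D.simple i ∧
      ∃ d : Fin n → ℕ, β = ∑ l, (d l : ℝ) • D.simple l ∧ 1 ≤ d i := by
  -- find a neighbor j of i
  obtain ⟨j, hji, hinner⟩ : ∃ j, j ≠ i ∧ ⟪D.simple i, D.simple j⟫ ≠ 0 := by
    by_contra h
    push_neg at h
    refine hirr ⟨{i}, ⟨i, rfl⟩, ?_, ?_⟩
    · obtain ⟨j, hj⟩ := Fintype.exists_ne_of_one_lt_card (by rw [Fintype.card_fin]; exact hn) i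
      exact ⟨j, by simpa using hj⟩
    · rintro i' (rfl : i' = i) j hj
      exact h j (by simpa using hj)
  set k : ℝ := 2 * ⟪D.simple j, D.simple i⟫ / ⟪D.simple i, D.simple i⟫ with hk
  have hkne : k ≠ 0 := by
    apply div_ne_zero
    · intro h
      apply hinner
      rw [real_inner_comm]
      simpa using h
    · exact (D.inner_simple_pos i).ne'
  set γ := D.refl i (D.simple j) with hγ
  have hγR : γ ∈ D.R := D.refl_mem (D.simple_mem j)
  have hγexp : γ = ∑ l, ((if l = j then (1:ℝ) else 0) - (if l = i then k else 0)) • D.simple l := by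
    simp only [sub_smul, Finset.sum_sub_distrib, ite_smul, zero_smul, one_smul,
      Finset.sum_ite_eq', Finset.mem_univ, if_true]
    rw [hγ, refl]
  rcases D.base γ hγR with ⟨d, hd⟩ | ⟨d, hd⟩
  · have heq := D.coeff_eq (hγexp.symm.trans hd)
    have hdi := congrFun heq i
    have hdj := congrFun heq j
    simp only [eq_self_iff_true, if_true, if_neg hji, if_neg (Ne.symm hji),
      zero_sub, sub_zero] at hdi hdj
    -- hdi : -k = d i ;  hdj : 1 = d j
    have hdi' : -k = (d i : ℝ) := hdi
    have hdi1 : 1 ≤ d i := by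
      rcases Nat.eq_zero_or_pos (d i) with h0 | h0
      · exfalso; apply hkne; rw [h0] at hdi'; push_cast at hdi'; linarith
      · exact h0
    refine ⟨γ, D.mem_Pos.mpr ⟨hγR, d, hd⟩, ?_, d, hd, hdi1⟩
    intro habs
    -- γ = αᵢ would force d j = 0, but d j = 1
    have hsimple : D.simple i = ∑ l, (if l = i then (1:ℝ) else 0) • D.simple l := by
      simp [ite_smul]
    have heq2 := D.coeff_eq ((hd.symm.trans (habs.trans hsimple)))
    have := congrFun heq2 j
    simp only [if_neg hji] at this
    rw [this] at hdj
    norm_num at hdj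
  · exfalso
    have hd' : γ = ∑ l, (-(d l : ℝ)) • D.simple l := by
      rw [hd, ← Finset.sum_neg_distrib]; simp
    have heq := D.coeff_eq (hγexp.symm.trans hd')
    have hdj := congrFun heq j
    simp only [eq_self_iff_true, if_true, if_neg hji, sub_zero] at hdj
    have : (0:ℝ) ≤ (d j : ℝ) := Nat.cast_nonneg _
    linarith [hdj, this]

end RootSystemData

/-- For an irreducible root system of rank `n ≥ 2` not of type `A₂`, there exists a
regular dominant weight `χ` lying in the monoid `ℕS` of non-negative integral combinations
of simple roots such that `s_{αᵢ}(χ) ∈ ℕS` for every simple reflection `s_{αᵢ}`. -/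
theorem exists_regular_dominant_weight_in_NS_with_reflections_nonneg
    {n : ℕ} (hn : 2 ≤ n) (D : RootSystemData n)
    (hirr : D.IsIrreducible) (hA2 : ¬ D.IsA2) :
    ∃ χ : EuclideanSpace ℝ (Fin n),
      D.NS χ ∧
      (∀ i, 0 < ⟪χ, D.simple i⟫) ∧
      (∀ i, D.NS (χ - (2 * ⟪χ, D.simple i⟫ / ⟪D.simple i, D.simple i⟫) • D.simple i)) := by
  classical
  set χ : EuclideanSpace ℝ (Fin n) := ∑ β ∈ D.Pos, β with hχ
  have hNS : D.NS χ := D.NS_sum (fun β hβ => (D.mem_Pos.mp hβ).2)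
  obtain ⟨c, hc⟩ := hNS
  have hinner : ∀ i, ⟪χ, D.simple i⟫ = ⟪D.simple i, D.simple i⟫ := fun i => D.sum_pos_inner i
  have hscal : ∀ i, 2 * ⟪χ, D.simple i⟫ / ⟪D.simple i, D.simple i⟫ = 2 := by
    intro i
    rw [hinner i, mul_div_assoc, div_self (D.inner_simple_pos i).ne', mul_one]
  -- coefficient bound : c i ≥ 2
  have hci : ∀ i, 2 ≤ c i := by
    intro i
    obtain ⟨β, hβP, hβne, d, hd, hdi⟩ := D.exists_extra_root hirr hn i
    have hβ' : β ∈ D.Pos.erase (D.simple i) := Finset.mem_erase.mpr ⟨hβne, hβP⟩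
    have hrestNS : D.NS (∑ γ ∈ (D.Pos.erase (D.simple i)).erase β, γ) :=
      D.NS_sum (fun γ hγ => (D.mem_Pos.mp (Finset.mem_of_mem_erase (Finset.mem_of_mem_erase hγ))).2)
    obtain ⟨e, he⟩ := hrestNS
    have h1 : ∑ β ∈ D.Pos, β
        = D.simple i + ∑ γ ∈ D.Pos.erase (D.simple i), γ :=
      (Finset.add_sum_erase _ (fun γ => γ) (D.simple_mem_Pos i)).symm
    have h2 : ∑ γ ∈ D.Pos.erase (D.simple i), γ
        = β + ∑ γ ∈ (D.Pos.erase (D.simple i)).erase β, γ :=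
      (Finset.add_sum_erase _ (fun γ => γ) hβ').symm
    have hχsplit : χ = D.simple i + (β + ∑ γ ∈ (D.Pos.erase (D.simple i)).erase β, γ) := by
      rw [hχ, h1, h2]
    have hχexp : χ = ∑ l, (((if l = i then (1:ℝ) else 0)) + ((d l : ℝ) + (e l : ℝ))) • D.simple l := by
      rw [hχsplit, he, hd]
      simp only [add_smul, Finset.sum_add_distrib, ite_smul, zero_smul, one_smul,
        Finset.sum_ite_eq', Finset.mem_univ, if_true]
    have heq := D.coeff_eq ((hc.symm.trans hχexp))
    have h1 := congrFun heq i
    simp only [eq_self_iff_true, if_true] at h1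
    have h2 : (1:ℝ) ≤ (d i : ℝ) := by exact_mod_cast hdi
    have h3 : (0:ℝ) ≤ (e i : ℝ) := Nat.cast_nonneg _
    have : (2:ℝ) ≤ (c i : ℝ) := by linarith [h1]
    exact_mod_cast this
  refine ⟨χ, ⟨c, hc⟩, fun i => by rw [hinner i]; exact D.inner_simple_pos i, fun i => ?_⟩
  rw [hscal i]
  refine ⟨fun l => c l - (if l = i then 2 else 0), ?_⟩
  have hcast : ∀ l, ((c l - (if l = i then 2 else 0) : ℕ) : ℝ)
      = (c l : ℝ) - (if l = i then (2:ℝ) else 0) := by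
    intro l
    by_cases hl : l = i
    · subst hl
      simp only [eq_self_iff_true, if_true]
      exact_mod_cast Nat.cast_sub (hci l)
    · simp [hl]
  calc χ - (2:ℝ) • D.simple i
      = ∑ l, ((c l : ℝ) - (if l = i then (2:ℝ) else 0)) • D.simple l := by
        simp only [sub_smul, Finset.sum_sub_distrib, ite_smul, zero_smul,
          Finset.sum_ite_eq', Finset.mem_univ, if_true]
        rw [← hc]
    _ = ∑ l, ((c l - (if l = i then 2 else 0) : ℕ) : ℝ) • D.simple l := by
        refine Finset.sum_congr rfl (fun l _ => ?_)
        rw [hcast l]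
end
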